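/- For every r with 1 ≤ r ≤ p, every x ∈ ℝ with Δ(x) ∈ (−2, 2), and either root Γ of Γ² − Δ(x)·Γ + 1 = 0, one has j_{r,Γ}(x) ≠ 0. (Lemma 2.4: the Jost-type function j_r is nonvanishing on the interior of the bands.) -/

import Mathlib

/-!
For real `x` the transfer matrices `T_n(x)` are real, and `det T_n = a₀ / a_n`; in particular
`T_p(x) ∈ SL₂(ℝ)` with trace `Δ(x) ∈ (-2, 2)`. Such an elliptic matrix has non-real eigenvalues
`Γ, Γ⁻¹`, and `(T_p)₂₁ ≠ 0`: otherwise its diagonal entries would be real eigenvalues with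
product `1`, forcing `|Δ| ≥ 2`. Clearing the denominator `Γ - Γ⁻¹`, the vanishing of
`j_{r,Γ}(x)` reads `(T_p)₂₁ (T_r)₂₂ + ((T_p)₁₁ - Γ⁻¹) (T_r)₂₁ = 0`; its imaginary part gives
`(T_r)₂₁ = 0`, and then `(T_r)₂₂ = 0`, contradicting `det T_r ≠ 0`.
-/

open Polynomial Matrix

/-- The one-step transfer matrix `A_k(z)` for periodic OPRL. -/
noncomputable def JacobiA (a b : ℕ → ℝ) (k : ℕ) (z : ℂ) : Matrix (Fin 2) (Fin 2) ℂ :=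
  ((a (k + 1) : ℂ))⁻¹ • !![z - (b (k + 1) : ℂ), -(a k : ℂ); (a (k + 1) : ℂ), 0]

/-- The transfer matrix `T_n(z) = A_{n-1}(z) ⋯ A_0(z)`. -/
noncomputable def JacobiT (a b : ℕ → ℝ) : ℕ → ℂ → Matrix (Fin 2) (Fin 2) ℂ
  | 0, _ => 1
  | n + 1, z => JacobiA a b n z * JacobiT a b n z

/-- The discriminant `Δ(z) = tr T_p(z)`. -/
noncomputable def JacobiDisc (a b : ℕ → ℝ) (p : ℕ) (z : ℂ) : ℂ :=
  (JacobiT a b p z).trace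

/-- The boundary-value Jost function `j_{r,Γ}(x) = a_Γ(x)·(T_r)₂₂ + b_Γ(x)·(T_r)₂₁`
with `a_Γ(x) = (T_p)₂₁/(Γ - Γ⁻¹)`, `b_Γ(x) = ((T_p)₁₁ - Γ⁻¹)/(Γ - Γ⁻¹)`. -/
noncomputable def JacobiJostBand (a b : ℕ → ℝ) (p r : ℕ) (Γ : ℂ) (x : ℝ) : ℂ :=
  (JacobiT a b p (x : ℂ) 1 0 / (Γ - Γ⁻¹)) * (JacobiT a b r (x : ℂ) 1 1) +
    ((JacobiT a b p (x : ℂ) 0 0 - Γ⁻¹) / (Γ - Γ⁻¹)) * (JacobiT a b r (x : ℂ) 1 0)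

theorem Matrix.det_map_ofReal {n : Type*} [Fintype n] [DecidableEq n] (M : Matrix n n ℝ) :
    (M.map (↑)).det = (M.det : ℂ) :=
  (Complex.ofRealHom.map_det M).symm

theorem Matrix.trace_map_ofReal {n : Type*} [Fintype n] (M : Matrix n n ℝ) :
    (M.map (↑)).trace = (M.trace : ℂ) :=
  (AddMonoidHom.map_trace Complex.ofRealHom M).symm

section JacobiTransfer

variable (a b : ℕ → ℝ)

theorem det_JacobiA {k : ℕ} (hk : a (k + 1) ≠ 0) (z : ℂ) :
    (JacobiA a b k z).det = a k / a (k + 1) := by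
  have hk' : (a (k + 1) : ℂ) ≠ 0 := Complex.ofReal_ne_zero.mpr hk
  rw [JacobiA, det_smul, det_fin_two_of, Fintype.card_fin]
  field_simp
  ring

theorem det_JacobiT (ha : ∀ k, a k ≠ 0) (n : ℕ) (z : ℂ) :
    (JacobiT a b n z).det = a 0 / a n := by
  induction n with
  | zero => simp [JacobiT, ha 0]
  | succ n ih =>
    rw [JacobiT, det_mul, det_JacobiA a b (ha (n + 1)), ih]
    have han : (a n : ℂ) ≠ 0 := Complex.ofReal_ne_zero.mpr (ha n)
    field_simp

theorem exists_JacobiT_ofReal (n : ℕ) (x : ℝ) :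
    ∃ M : Matrix (Fin 2) (Fin 2) ℝ, JacobiT a b n x = M.map (↑) := by
  induction n with
  | zero => exact ⟨1, by simp [JacobiT]⟩
  | succ n ih =>
    obtain ⟨M, hM⟩ := ih
    refine ⟨(a (n + 1))⁻¹ • !![x - b (n + 1), -a n; a (n + 1), 0] * M, ?_⟩
    rw [JacobiT, hM]
    ext i j
    fin_cases i <;> fin_cases j <;> simp [JacobiA, mul_apply, vecMul, dotProduct, Fin.sum_univ_two]

end JacobiTransfer

theorem Matrix.apply_one_zero_ne_zero_of_det_eq_one_of_trace_mem_Ioo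
    {M : Matrix (Fin 2) (Fin 2) ℝ} (hdet : M.det = 1) (htr : M.trace ∈ Set.Ioo (-2) 2) :
    M 1 0 ≠ 0 := by
  intro h
  rw [det_fin_two, h, mul_zero, sub_zero] at hdet
  rw [trace_fin_two] at htr
  obtain ⟨h₁, h₂⟩ := htr
  nlinarith [sq_nonneg (M 0 0 - M 1 1)]

theorem Complex.im_ne_zero_of_sq_sub_mul_add_one_eq_zero {Γ : ℂ} {t : ℝ}
    (ht : t ∈ Set.Ioo (-2) 2) (h : Γ ^ 2 - t * Γ + 1 = 0) : Γ.im ≠ 0 := by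
  intro him
  have hre : Γ.re ^ 2 - t * Γ.re + 1 = 0 := by
    have := congrArg Complex.re h
    simpa [sq, him] using this
  obtain ⟨h₁, h₂⟩ := ht
  nlinarith [sq_nonneg (2 * Γ.re - t)]

theorem Complex.ofReal_mul_add_sub_mul_ne_zero {u v m m' : ℝ} {w : ℂ} (hw : w.im ≠ 0)
    (hm' : m' ≠ 0) (huv : u ≠ 0 ∨ v ≠ 0) : (m' : ℂ) * v + (m - w) * u ≠ 0 := by
  intro h
  have hu : u = 0 := by
    have := congrArg Complex.im h
    simp only [add_im, mul_im, ofReal_re, ofReal_im, mul_zero, zero_mul, add_zero, sub_re, sub_im,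
      zero_sub, neg_mul, zero_add, zero_im, neg_eq_zero, mul_eq_zero] at this
    tauto
  have hv : v = 0 := by
    rw [hu] at h
    simpa [hm'] using h
  tauto

theorem oprl_periodic_jost_nonvanishing_on_bands_general
    (p : ℕ) (hp : 1 ≤ p) (a b : ℕ → ℝ)
    (ha : ∀ n, 1 ≤ n → 0 < a n)
    (ha0 : a 0 = a p)
    (r : ℕ)
    (x : ℝ)
    (hx : ∃ t : ℝ, t ∈ Set.Ioo (-2 : ℝ) 2 ∧ JacobiDisc a b p (x : ℂ) = (t : ℂ))
    (Γ : ℂ)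
    (hΓ : Γ ^ 2 - JacobiDisc a b p (x : ℂ) * Γ + 1 = 0) :
    JacobiJostBand a b p r Γ x ≠ 0 := by
  obtain ⟨t, ht, hΔ⟩ := hx
  have ha' : ∀ n, a n ≠ 0
    | 0 => ha0 ▸ (ha p hp).ne'
    | n + 1 => (ha (n + 1) n.succ_pos).ne'
  obtain ⟨M, hM⟩ := exists_JacobiT_ofReal a b p x
  obtain ⟨S, hS⟩ := exists_JacobiT_ofReal a b r x
  have hMdet : M.det = 1 := by
    have h : (M.det : ℂ) = a 0 / a p := by rw [← det_map_ofReal, ← hM, det_JacobiT a b ha']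
    rwa [ha0, div_self (Complex.ofReal_ne_zero.mpr (ha' p)), Complex.ofReal_eq_one] at h
  have hMtr : M.trace = t := by
    rwa [JacobiDisc, hM, trace_map_ofReal, Complex.ofReal_inj] at hΔ
  have hSrow : S 1 0 ≠ 0 ∨ S 1 1 ≠ 0 := by
    have h : (S.det : ℂ) = a 0 / a r := by rw [← det_map_ofReal, ← hS, det_JacobiT a b ha']
    rw [← Complex.ofReal_div, Complex.ofReal_inj] at h
    contrapose! h
    rw [det_fin_two, h.1, h.2, mul_zero, mul_zero, sub_zero]
    exact (div_ne_zero (ha' 0) (ha' r)).symm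
  rw [hΔ] at hΓ
  have hΓim := Complex.im_ne_zero_of_sq_sub_mul_add_one_eq_zero ht hΓ
  have hΓinv : Γ⁻¹ = t - Γ :=
    inv_eq_of_mul_eq_one_right (by linear_combination -hΓ)
  have hden : Γ - Γ⁻¹ ≠ 0 := fun h => hΓim (by simpa [hΓinv] using congrArg Complex.im h)
  rw [JacobiJostBand, hM, hS, div_mul_eq_mul_div, div_mul_eq_mul_div, ← add_div]
  refine div_ne_zero ?_ hden
  exact Complex.ofReal_mul_add_sub_mul_ne_zero (by simpa [hΓinv] using hΓim)
    (M.apply_one_zero_ne_zero_of_det_eq_one_of_trace_mem_Ioo hMdet (hMtr ▸ ht)) hSrow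

/-- **Lemma 2.4.** For `1 ≤ r ≤ p`, all `x` in the interior of the bands
(`Δ(x) ∈ (-2,2)`), and either root `Γ` of `Γ² - Δ(x)Γ + 1 = 0`, the Jost-type
function `j_{r,Γ}(x)` is nonzero. -/
theorem oprl_periodic_jost_nonvanishing_on_bands
    (p : ℕ) (hp : 1 ≤ p) (a b : ℕ → ℝ)
    (ha : ∀ n, 1 ≤ n → 0 < a n)
    (hpera : ∀ n, 1 ≤ n → a (n + p) = a n)
    (hperb : ∀ n, 1 ≤ n → b (n + p) = b n)
    (ha0 : a 0 = a p)
    (P : ℕ → Polynomial ℝ)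
    (hP0 : P 0 = 1)
    (hPrec0 : (X : Polynomial ℝ) * P 0 = a 1 • P 1 + b 1 • P 0)
    (hPrec : ∀ n, 1 ≤ n →
      (X : Polynomial ℝ) * P n = a (n + 1) • P (n + 1) + b (n + 1) • P n + a n • P (n - 1))
    (r : ℕ) (hr1 : 1 ≤ r) (hrp : r ≤ p)
    (x : ℝ)
    (hx : ∃ t : ℝ, t ∈ Set.Ioo (-2 : ℝ) 2 ∧ JacobiDisc a b p (x : ℂ) = (t : ℂ))
    (Γ : ℂ)
    (hΓ : Γ ^ 2 - JacobiDisc a b p (x : ℂ) * Γ + 1 = 0) :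
    JacobiJostBand a b p r Γ x ≠ 0 :=
  oprl_periodic_jost_nonvanishing_on_bands_general p hp a b ha ha0 r x hx Γ hΓ
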